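/- arXiv:2509.13238 — 3 statements merged into one kernel-verified Lean document; each statement's English description precedes it below -/
import Mathlib

section
/- Let F be a field of characteristic 0, let l ∈ F[x_1,...,x_n] be a linear polynomial whose support (number of variables appearing with nonzero coefficient) is at least 2, let h ∈ F[x_1,...,x_n] be a nonzero polynomial, and let d ∈ ℕ. Then the polynomial l^d · h has at least d+1 monomials with nonzero coefficient. -/
/-!
Under the Kronecker substitution `X k ↦ X ^ B ^ k`, with `B` larger than the total degree of `h`,
no polynomial gains terms while `l` and `h` keep theirs. Having at least two terms, the image of `l`
has a nonzero root `r` in an algebraic closure, so `(X - r) ^ d` divides the image `f` of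
`l ^ d * h`. A univariate `f ≠ 0` divisible by `(X - r) ^ d` with `r ≠ 0` has more than `d` terms:
for an exponent `m` of `f`, the Euler operator `X d/dX - m` removes exactly the term of degree `m`
and lowers the multiplicity of `r` by at most one.
-/

open Finset

namespace Polynomial

variable {R : Type*} [CommRing R]

theorem coeff_X_mul_derivative_sub_C_mul (f : R[X]) (m k : ℕ) :
    (X * derivative f - C (m : R) * f).coeff k = ((k : R) - m) * f.coeff k := by
  rcases k with _ | k
  · simp
  · rw [coeff_sub, coeff_X_mul, coeff_derivative, coeff_C_mul]
    push_cast
    ring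

theorem pow_dvd_X_mul_derivative_sub_C_mul {p f : R[X]} {d : ℕ} (m : ℕ) (h : p ^ (d + 1) ∣ f) :
    p ^ d ∣ X * derivative f - C (m : R) * f := by
  obtain ⟨q, rfl⟩ := h
  refine ⟨C ((d + 1 : ℕ) : R) * X * derivative p * q + p * (X * derivative q - C (m : R) * q), ?_⟩
  rw [derivative_mul, derivative_pow, Nat.add_sub_cancel]
  ring

theorem support_X_mul_derivative_sub_C_mul [IsDomain R] [CharZero R] (f : R[X]) (m : ℕ) :
    (X * derivative f - C (m : R) * f).support = f.support.erase m := by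
  ext k
  simp only [mem_support_iff, mem_erase, coeff_X_mul_derivative_sub_C_mul, ne_eq, mul_eq_zero,
    sub_eq_zero, Nat.cast_inj, not_or]

theorem one_lt_card_support_of_isRoot [IsDomain R] {f : R[X]} (hf : f ≠ 0) {r : R} (hr : r ≠ 0)
    (hroot : f.IsRoot r) : 1 < #f.support := by
  by_contra! h
  obtain ⟨m, c, rfl⟩ := card_support_le_one_iff_monomial.mp h
  have hc : c ≠ 0 := by rintro rfl; simp at hf
  simp [IsRoot, hc, hr] at hroot

theorem lt_card_support_of_X_sub_C_pow_dvd [IsDomain R] [CharZero R] {r : R} (hr : r ≠ 0) {d : ℕ}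
    {f : R[X]} (hf : f ≠ 0) (hdvd : (X - C r) ^ d ∣ f) : d < #f.support := by
  induction d generalizing f with
  | zero => exact card_pos.mpr (support_nonempty.mpr hf)
  | succ d ih =>
    have hroot : f.IsRoot r := dvd_iff_isRoot.mp ((dvd_pow_self _ d.succ_ne_zero).trans hdvd)
    have hcard := one_lt_card_support_of_isRoot hf hr hroot
    obtain ⟨m, hm⟩ := card_pos.mp (zero_lt_one.trans hcard)
    set g := X * derivative f - C (m : R) * f
    have hg : #g.support + 1 = #f.support := by
      rw [support_X_mul_derivative_sub_C_mul, card_erase_add_one hm]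
    have hg0 : g ≠ 0 := by
      rintro hg0
      rw [hg0, support_zero, card_empty] at hg
      omega
    have := ih hg0 (pow_dvd_X_mul_derivative_sub_C_mul m hdvd)
    omega

theorem exists_isRoot_ne_zero_of_one_lt_card_support {K : Type*} [Field K] [IsAlgClosed K]
    {f : K[X]} (h : 1 < #f.support) : ∃ r, r ≠ 0 ∧ f.IsRoot r := by
  have hf : f ≠ 0 := by rintro rfl; simp at h
  obtain ⟨q, hfq, hq⟩ := exists_eq_pow_rootMultiplicity_mul_and_not_dvd f hf 0
  rw [C_0, sub_zero] at hfq hq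
  rw [X_dvd_iff, coeff_zero_eq_eval_zero] at hq
  have hdeg : q.degree ≠ 0 := by
    intro hdeg
    rw [eq_C_of_degree_eq_zero hdeg, mul_comm, C_mul_X_pow_eq_monomial] at hfq
    exact h.not_ge (card_support_le_one_iff_monomial.mpr ⟨_, _, hfq⟩)
  obtain ⟨r, hr⟩ := IsAlgClosed.exists_root q hdeg
  refine ⟨r, fun h0 => hq (h0 ▸ hr.eq_zero), ?_⟩
  rw [hfq, IsRoot, eval_mul, hr.eq_zero, mul_zero]

end Polynomial

theorem Nat.ofDigits_ofFn {n : ℕ} (b : ℕ) (f : Fin n → ℕ) :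
    Nat.ofDigits b (List.ofFn f) = ∑ i, f i * b ^ (i : ℕ) := by
  induction n with
  | zero => simp
  | succ n ih =>
    rw [List.ofFn_succ, Nat.ofDigits_cons, ih, Fin.sum_univ_succ, mul_sum]
    simp only [Fin.val_zero, pow_zero, mul_one, Fin.val_succ, pow_succ]
    congr 1
    exact sum_congr rfl fun i _ => by ring

namespace MvPolynomial

section Linear

variable {R σ : Type*} [CommSemiring R] [Fintype σ]

theorem totalDegree_linear_le (a : σ → R) (c : R) :
    (∑ i, C (a i) * X i + C c).totalDegree ≤ 1 := by
  refine (totalDegree_add _ _).trans (max_le (totalDegree_finsetSum_le fun i _ => ?_) ?_)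
  · rw [C_mul_X_eq_monomial]
    exact (totalDegree_monomial_le _ _).trans (by simp)
  · simp

theorem coeff_single_linear [DecidableEq σ] (a : σ → R) (c : R) (i : σ) :
    coeff (Finsupp.single i 1) (∑ j, C (a j) * X j + C c) = a i := by
  rw [coeff_add, coeff_C, if_neg (Finsupp.single_ne_zero.mpr one_ne_zero).symm, add_zero,
    coeff_sum, sum_eq_single i]
  · simp
  · intro j _ hji
    simp [coeff_C_mul, coeff_X, Finsupp.single_left_inj one_ne_zero, hji]
  · simp

theorem card_le_card_support_linear {a : σ → R} (c : R) {s : Finset σ}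
    (hs : ∀ i ∈ s, a i ≠ 0) : #s ≤ #(∑ i, C (a i) * X i + C c).support := by
  classical
  refine card_le_card_of_injOn (fun i => Finsupp.single i 1) (fun i hi => ?_) ?_
  · rw [mem_coe, mem_support_iff, coeff_single_linear]
    exact hs i hi
  · exact fun i _ j _ hij => Finsupp.single_left_injective one_ne_zero hij

end Linear

section Kronecker

variable {R : Type*} [CommSemiring R] {n : ℕ}

def kroneckerExponent (B : ℕ) (α : Fin n →₀ ℕ) : ℕ :=
  ∑ k, α k * B ^ (k : ℕ)

noncomputable def kroneckerSubst (B : ℕ) : MvPolynomial (Fin n) R →ₐ[R] Polynomial R :=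
  aeval fun k => Polynomial.X ^ B ^ (k : ℕ)

theorem kroneckerSubst_eq_sum (B : ℕ) (p : MvPolynomial (Fin n) R) :
    kroneckerSubst B p =
      ∑ α ∈ p.support, Polynomial.monomial (kroneckerExponent B α) (coeff α p) := by
  rw [kroneckerSubst, aeval_eq_eval₂Hom, coe_eval₂Hom, eval₂_eq']
  refine sum_congr rfl fun α _ => ?_
  simp only [← pow_mul, prod_pow_eq_pow_sum, kroneckerExponent, Polynomial.algebraMap_eq,
    Polynomial.C_mul_X_pow_eq_monomial, mul_comm]

theorem coeff_kroneckerSubst (B : ℕ) (p : MvPolynomial (Fin n) R) (m : ℕ) :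
    (kroneckerSubst B p).coeff m = ∑ α ∈ p.support with kroneckerExponent B α = m, coeff α p := by
  rw [kroneckerSubst_eq_sum, Polynomial.finsetSum_coeff, sum_filter]
  simp only [Polynomial.coeff_monomial]

theorem support_kroneckerSubst_subset (B : ℕ) (p : MvPolynomial (Fin n) R) :
    (kroneckerSubst B p).support ⊆ p.support.image (kroneckerExponent B) := by
  intro m hm
  rw [Polynomial.mem_support_iff, coeff_kroneckerSubst] at hm
  obtain ⟨α, hα, -⟩ := exists_ne_zero_of_sum_ne_zero hm
  exact mem_image.mpr ⟨α, mem_filter.mp hα⟩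

theorem card_support_kroneckerSubst_le (B : ℕ) (p : MvPolynomial (Fin n) R) :
    #(kroneckerSubst B p).support ≤ #p.support :=
  (card_le_card (support_kroneckerSubst_subset B p)).trans card_image_le

theorem injOn_kroneckerExponent (B : ℕ) :
    Set.InjOn (kroneckerExponent (n := n) B) {α | ∀ k, α k < B} := by
  rcases lt_or_ge 1 B with hB | hB
  · intro α hα β hβ hαβ
    have hdigits := Nat.ofDigits_inj_of_len_eq hB (List.length_ofFn.trans List.length_ofFn.symm)
      (by simpa [List.mem_ofFn] using hα) (by simpa [List.mem_ofFn] using hβ)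
      (by rw [Nat.ofDigits_ofFn, Nat.ofDigits_ofFn]; exact hαβ)
    ext k
    exact congrFun (List.ofFn_injective hdigits) k
  · refine Set.Subsingleton.injOn (fun α hα β hβ => Finsupp.ext fun k => ?_) _
    have := hα k
    have := hβ k
    omega

theorem injOn_kroneckerExponent_support {B : ℕ} {p : MvPolynomial (Fin n) R}
    (hp : p.totalDegree < B) : Set.InjOn (kroneckerExponent B) (p.support : Set (Fin n →₀ ℕ)) := by
  have hdigits : ∀ α ∈ p.support, ∀ k, α k < B := fun α hα k =>
    ((monomial_le_degreeOf k hα).trans (degreeOf_le_totalDegree p k)).trans_lt hp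
  exact fun α hα β hβ => injOn_kroneckerExponent B (hdigits α hα) (hdigits β hβ)

theorem support_kroneckerSubst_of_totalDegree_lt {B : ℕ} {p : MvPolynomial (Fin n) R}
    (hp : p.totalDegree < B) :
    (kroneckerSubst B p).support = p.support.image (kroneckerExponent B) := by
  have hinj := injOn_kroneckerExponent_support hp
  refine (support_kroneckerSubst_subset B p).antisymm (image_subset_iff.mpr fun α hα => ?_)
  have : {β ∈ p.support | kroneckerExponent B β = kroneckerExponent B α} = {α} := by
    ext β
    simp only [mem_filter, mem_singleton]
    exact ⟨fun hβ => hinj hβ.1 hα hβ.2, by rintro rfl; exact ⟨hα, rfl⟩⟩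
  rw [Polynomial.mem_support_iff, coeff_kroneckerSubst, this, sum_singleton]
  exact mem_support_iff.mp hα

theorem card_support_kroneckerSubst_of_totalDegree_lt {B : ℕ} {p : MvPolynomial (Fin n) R}
    (hp : p.totalDegree < B) : #(kroneckerSubst B p).support = #p.support := by
  rw [support_kroneckerSubst_of_totalDegree_lt hp,
    card_image_of_injOn (injOn_kroneckerExponent_support hp)]

end Kronecker

end MvPolynomial

open MvPolynomial
open scoped Classical

/-- over a field of characteristic 0, if `l` is a linear polynomial with
support (number of variables with nonzero coefficient) at least 2 and `h ≠ 0`,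
then `l ^ d * h` has at least `d + 1` monomials with nonzero coefficient. -/
theorem sparsity_of_power_of_linear_times_poly
    {F : Type*} [Field F] [CharZero F] {n : ℕ} (a : Fin n → F) (c : F)
    (hsupp : 2 ≤ (Finset.univ.filter fun i => a i ≠ 0).card)
    (h : MvPolynomial (Fin n) F) (hh : h ≠ 0) (d : ℕ) :
    d + 1 ≤ (((∑ i, C (a i) * X i + C c) ^ d * h).support).card := by
  set l := ∑ i, C (a i) * X i + C c
  let K := AlgebraicClosure F
  let B := h.totalDegree + 2
  let ψ : MvPolynomial (Fin n) F →+* Polynomial K :=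
    (Polynomial.mapRingHom (algebraMap F K)).comp (kroneckerSubst B).toRingHom
  have support_ψ (p) : (ψ p).support = (kroneckerSubst B p).support :=
    Polynomial.support_map_of_injective _ (algebraMap F K).injective
  have hl : 1 < #(ψ l).support := by
    rw [support_ψ, card_support_kroneckerSubst_of_totalDegree_lt
      ((totalDegree_linear_le a c).trans_lt (by omega))]
    exact hsupp.trans (card_le_card_support_linear c fun i hi => (mem_filter.mp hi).2)
  have hψl : ψ l ≠ 0 := by
    rintro h0
    simp [h0] at hl
  have hψh : ψ h ≠ 0 := by
    rw [Ne, ← Polynomial.card_support_eq_zero, support_ψ,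
      card_support_kroneckerSubst_of_totalDegree_lt (by omega), card_eq_zero,
      MvPolynomial.support_eq_empty]
    exact hh
  obtain ⟨r, hr, hroot⟩ := Polynomial.exists_isRoot_ne_zero_of_one_lt_card_support hl
  have hdvd : (Polynomial.X - Polynomial.C r) ^ d ∣ ψ (l ^ d * h) := by
    rw [map_mul, map_pow]
    exact (pow_dvd_pow_of_dvd (Polynomial.dvd_iff_isRoot.mpr hroot) d).mul_right _
  have hne : ψ (l ^ d * h) ≠ 0 := by
    rw [map_mul, map_pow]
    exact mul_ne_zero (pow_ne_zero d hψl) hψh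
  calc d < #(ψ (l ^ d * h)).support := Polynomial.lt_card_support_of_X_sub_C_pow_dvd hr hne hdvd
    _ ≤ #(l ^ d * h).support := by
      rw [support_ψ]
      exact card_support_kroneckerSubst_le B _
end

section
/- Let G = ([n], E) be a simple graph with maximum degree Δ, and define f_G = Σ_{{i,j}∈E} x_i^{n_i(j)} x_j^{n_j(i)} + Σ_{i=1}^{n} x_i^{Δ+1} over a field F, where n_i(j) is the number of neighbours of i that are ≤ j. Then for every S ⊆ [n] with 1 ≤ |S| ≤ n−1, rank(M_S(f_G)) = |cut(S)| + 2. -/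
open MvPolynomial
open scoped Classical

/-- The Nisan matrix of `f` with respect to a variable subset `S`: rows indexed by
monomials supported on `S`, columns by monomials supported on the complement of `S`,
entries the coefficients of the product monomials in `f` (and `0` for index pairs not
respecting the support conditions). -/
noncomputable def nisanMatrix {F : Type*} [Field F] {n : ℕ}
    (f : MvPolynomial (Fin n) F) (S : Finset (Fin n)) :
    Matrix (Fin n →₀ ℕ) (Fin n →₀ ℕ) F :=
  Matrix.of fun m₁ m₂ =>
    if m₁.support ⊆ S ∧ m₂.support ⊆ Sᶜ then f.coeff (m₁ + m₂) else 0

/-- The rank of the Nisan matrix `M_S(f)`: the dimension of the span of its rows. -/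
noncomputable def nisanRank {F : Type*} [Field F] {n : ℕ}
    (f : MvPolynomial (Fin n) F) (S : Finset (Fin n)) : ℕ :=
  Module.finrank F (Submodule.span F (Set.range fun m₁ => nisanMatrix f S m₁))

variable {n : ℕ}

/-- `nbhdPos G i j` = the number of neighbours of `i` that are `≤ j` (the position of `j`
in the increasing list of neighbours of `i`, when `j` is a neighbour of `i`). -/
noncomputable def nbhdPos (G : SimpleGraph (Fin n)) (i j : Fin n) : ℕ :=
  ((G.neighborFinset i).filter fun v => v ≤ j).card

/-- The set of edges of `G` with exactly one endpoint in `S`. -/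
noncomputable def cutFinset (G : SimpleGraph (Fin n)) (S : Finset (Fin n)) :
    Finset (Sym2 (Fin n)) :=
  G.edgeFinset.filter fun e => ∃ i ∈ S, ∃ j ∉ S, e = s(i, j)

/-- The polynomial `f_G = Σ_{{i,j}∈E} x_i^{n_i(j)} x_j^{n_j(i)} + Σ_i x_i^{Δ+1}`,
where `Δ` is the maximum degree of `G`. -/
noncomputable def cutSumPoly (F : Type*) [Field F] (G : SimpleGraph (Fin n)) :
    MvPolynomial (Fin n) F :=
  (∑ e ∈ G.edgeFinset,
    Sym2.lift ⟨fun i j => X i ^ nbhdPos G i j * X j ^ nbhdPos G j i,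
      fun i j => by ring⟩ e) +
  ∑ i : Fin n, (X i : MvPolynomial (Fin n) F) ^ (G.maxDegree + 1)

/-!
A monomial `m` of `f_G` contributes a single `1` to `M_S(f_G)`, in the row of its `S`-part
and the column of its `Sᶜ`-part. The monomials with trivial `S`-part all sit in row `1`; those
with trivial `Sᶜ`-part (the powers `x_i^{Δ+1}` and the edges inside `S`) all sit in column `1`;
a cut edge `{i, j}` with `i ∈ S` gives the entry at `(x_i^{n_i(j)}, x_j^{n_j(i)})`, and distinct
cut edges give distinct rows and columns because `n_i` is injective on the neighbours of `i`
and the exponent `Δ + 1` is never of the form `n_i(j)`. So the row space is spanned by row `1`,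
the unit vector at column `1` and the `|cut(S)|` unit vectors at the columns `x_j^{n_j(i)}`;
conversely, the rows `x_i^{n_i(j)}`, `x_{i₀}^{Δ+1}` (`i₀ ∈ S`) and `1` are independent, since
against the columns `x_j^{n_j(i)}`, `1` and `x_{j₀}^{Δ+1}` (`j₀ ∉ S`) they form an identity
matrix.
-/

open Finsupp (single)

theorem linearIndependent_of_apply_eq_ite {R ι κ : Type*} [Semiring R] [DecidableEq ι]
    {v : ι → κ → R} (c : ι → κ) (h : ∀ i j, v i (c j) = if i = j then 1 else 0) :
    LinearIndependent R v := by
  refine LinearIndependent.of_comp (LinearMap.funLeft R R c) ?_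
  convert Pi.linearIndependent_single_one ι R with i
  ext j
  simp [LinearMap.funLeft, h, Pi.single_apply, eq_comm]

theorem Finsupp.filter_mem_eq_and_filter_notMem_eq_iff {σ M : Type*} [AddCommMonoid M]
    [Fintype σ] [DecidableEq σ] {S : Finset σ} {m m₁ m₂ : σ →₀ M} :
    m.filter (· ∈ S) = m₁ ∧ m.filter (· ∉ S) = m₂ ↔
      m₁.support ⊆ S ∧ m₂.support ⊆ Sᶜ ∧ m = m₁ + m₂ := by
  constructor
  · rintro ⟨rfl, rfl⟩
    refine ⟨?_, ?_, (filter_add_filter_not m _).symm⟩ <;>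
      simp +contextual [Finset.subset_iff, support_filter]
  · rintro ⟨h₁, h₂, rfl⟩
    have h₁' : ∀ x, m₁ x ≠ 0 → x ∈ S := fun x hx => h₁ (mem_support_iff.2 hx)
    have h₂' : ∀ x, m₂ x ≠ 0 → x ∉ S := fun x hx => Finset.mem_compl.1 (h₂ (mem_support_iff.2 hx))
    rw [filter_add, filter_add, (filter_eq_self_iff (· ∈ S) m₁).2 h₁',
      (filter_eq_zero_iff (· ∈ S) m₂).2 fun x hx => by_contra fun h => h₂' x h hx,
      (filter_eq_self_iff (· ∉ S) m₂).2 h₂',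
      (filter_eq_zero_iff (· ∉ S) m₁).2 fun x hx => by_contra fun h => hx (h₁' x h)]
    simp

theorem Finsupp.eq_left_or_eq_right_of_single_eq_single_add_single {α M : Type*} [AddZeroClass M]
    {i j k : α} {x y z : M} (hij : i ≠ j) (hz : z ≠ 0)
    (h : single k z = single i x + single j y) :
    k = i ∧ x = z ∧ y = 0 ∨ k = j ∧ x = 0 ∧ y = z := by
  have hi := DFunLike.congr_fun h i
  have hj := DFunLike.congr_fun h j
  have hk := DFunLike.congr_fun h k
  simp only [Finsupp.add_apply, Finsupp.single_apply, hij, hij.symm, if_false, add_zero,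
    zero_add, if_true] at hi hj hk
  by_cases hki : k = i
  · subst hki; simp_all
  · by_cases hkj : k = j
    · subst hkj; simp_all
    · simp only [Ne.symm hki, Ne.symm hkj, if_false, add_zero] at hk
      exact absurd hk hz

section Nisan

variable {F : Type*} [Field F]

noncomputable def nisanRowSpace (f : MvPolynomial (Fin n) F) (S : Finset (Fin n)) :
    Submodule F ((Fin n →₀ ℕ) → F) :=
  Submodule.span F (Set.range (nisanMatrix f S))

theorem nisanRank_eq_finrank (f : MvPolynomial (Fin n) F) (S : Finset (Fin n)) :
    nisanRank f S = Module.finrank F (nisanRowSpace f S) := rfl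

theorem nisanMatrix_mem_nisanRowSpace (f : MvPolynomial (Fin n) F) (S : Finset (Fin n))
    (m₁ : Fin n →₀ ℕ) : nisanMatrix f S m₁ ∈ nisanRowSpace f S :=
  Submodule.subset_span ⟨m₁, rfl⟩

theorem nisanMatrix_apply_of_support_subset (f : MvPolynomial (Fin n) F) {S : Finset (Fin n)}
    {m₁ m₂ : Fin n →₀ ℕ} (h₁ : m₁.support ⊆ S) (h₂ : m₂.support ⊆ Sᶜ) :
    nisanMatrix f S m₁ m₂ = coeff (m₁ + m₂) f :=
  if_pos ⟨h₁, h₂⟩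

theorem nisanMatrix_eq_sum (f : MvPolynomial (Fin n) F) (S : Finset (Fin n))
    (m₁ : Fin n →₀ ℕ) :
    nisanMatrix f S m₁ = ∑ m ∈ f.support,
      if m.filter (· ∈ S) = m₁ then coeff m f • Pi.single (m.filter (· ∉ S)) 1 else 0 := by
  ext m₂
  have key : ∀ m, (if m.filter (· ∈ S) = m₁ then coeff m f • Pi.single (m.filter (· ∉ S)) 1
      else (0 : (Fin n →₀ ℕ) → F)) m₂ =
      if m₁.support ⊆ S ∧ m₂.support ⊆ Sᶜ then (if m = m₁ + m₂ then coeff m f else 0) else 0 := by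
    intro m
    simp only [← ite_and, and_assoc, ← Finsupp.filter_mem_eq_and_filter_notMem_eq_iff]
    split_ifs <;> simp_all [eq_comm]
  simp only [Finset.sum_apply, key, nisanMatrix, Matrix.of_apply]
  split_ifs
  · rw [Finset.sum_ite_eq']
    split_ifs with hm
    · rfl
    · exact notMem_support_iff.1 hm
  · simp

end Nisan

section CutSumPoly

variable {F : Type*} [Field F] {G : SimpleGraph (Fin n)}

theorem nbhdPos_pos {i j : Fin n} (h : G.Adj i j) : 0 < nbhdPos G i j :=
  Finset.card_pos.2 ⟨j, by simp [h]⟩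

theorem nbhdPos_le_maxDegree (i j : Fin n) : nbhdPos G i j ≤ G.maxDegree :=
  (Finset.card_filter_le _ _).trans (G.degree_le_maxDegree i)

theorem nbhdPos_strictMonoOn (i : Fin n) :
    StrictMonoOn (nbhdPos G i) {j | G.Adj i j} := by
  intro a _ b hb hab
  refine Finset.card_lt_card <| (Finset.ssubset_iff_of_subset <|
    Finset.monotone_filter_right _ fun v _ hv => hv.trans hab.le).2 ⟨b, ?_, ?_⟩
  · simpa using hb
  · simp [hab]

theorem nbhdPos_injOn (i : Fin n) : Set.InjOn (nbhdPos G i) {j | G.Adj i j} :=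
  (nbhdPos_strictMonoOn i).injOn

noncomputable def edgeExponent (G : SimpleGraph (Fin n)) (i j : Fin n) : Fin n →₀ ℕ :=
  single i (nbhdPos G i j) + single j (nbhdPos G j i)

theorem edgeExponent_comm (i j : Fin n) : edgeExponent G i j = edgeExponent G j i :=
  add_comm _ _

theorem support_edgeExponent {i j : Fin n} (h : G.Adj i j) :
    (edgeExponent G i j).support = {i, j} :=
  Finsupp.support_single_add_single h.ne (nbhdPos_pos h).ne' (nbhdPos_pos h.symm).ne'

theorem SimpleGraph.Adj.eq_of_edgeExponent_eq_single_add_single {a b i j : Fin n} {x y : ℕ}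
    (hab : G.Adj a b) (hij : i ≠ j) (h : edgeExponent G a b = single i x + single j y) :
    s(a, b) = s(i, j) ∧ x = nbhdPos G i j ∧ y = nbhdPos G j i := by
  have hsub : ({a, b} : Finset (Fin n)) ⊆ {i, j} :=
    support_edgeExponent hab ▸ h ▸ Finsupp.support_single_add_single_subset
  have ha := hsub (by simp : a ∈ _)
  have hb := hsub (by simp : b ∈ _)
  simp only [Finset.mem_insert, Finset.mem_singleton] at ha hb
  have hi := DFunLike.congr_fun h i
  have hj := DFunLike.congr_fun h j
  rcases ha with rfl | rfl <;> rcases hb with rfl | rfl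
  all_goals first
    | exact absurd rfl hab.ne
    | simp [edgeExponent, hij, Ne.symm hij] at hi hj ⊢; omega

variable (G) in
noncomputable def cutSumSupport : Finset (Fin n →₀ ℕ) :=
  G.edgeFinset.image (Sym2.lift ⟨edgeExponent G, edgeExponent_comm⟩) ∪
    Finset.univ.image fun i => single i (G.maxDegree + 1)

theorem mem_cutSumSupport {m : Fin n →₀ ℕ} :
    m ∈ cutSumSupport G ↔
      (∃ i j, G.Adj i j ∧ edgeExponent G i j = m) ∨ ∃ i, single i (G.maxDegree + 1) = m := by
  simp [cutSumSupport, Sym2.exists]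

theorem single_add_single_mem_cutSumSupport_iff {i j : Fin n} {x y : ℕ} (hij : i ≠ j) :
    single i x + single j y ∈ cutSumSupport G ↔
      x = 0 ∧ y = G.maxDegree + 1 ∨ x = G.maxDegree + 1 ∧ y = 0 ∨
        G.Adj i j ∧ x = nbhdPos G i j ∧ y = nbhdPos G j i := by
  rw [mem_cutSumSupport]
  constructor
  · rintro (⟨a, b, hab, h⟩ | ⟨k, h⟩)
    · obtain ⟨hs, hx, hy⟩ := hab.eq_of_edgeExponent_eq_single_add_single hij h
      exact Or.inr (Or.inr ⟨G.mem_edgeSet.1 (hs ▸ hab), hx, hy⟩)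
    · rcases Finsupp.eq_left_or_eq_right_of_single_eq_single_add_single hij
        (Nat.succ_ne_zero _) h with ⟨-, hx, hy⟩ | ⟨-, hx, hy⟩
      exacts [Or.inr (Or.inl ⟨hx, hy⟩), Or.inl ⟨hx, hy⟩]
  · rintro (⟨rfl, rfl⟩ | ⟨rfl, rfl⟩ | ⟨hadj, rfl, rfl⟩)
    · exact Or.inr ⟨j, by simp⟩
    · exact Or.inr ⟨i, by simp⟩
    · exact Or.inl ⟨i, j, hadj, rfl⟩

theorem injOn_lift_edgeExponent :
    Set.InjOn (Sym2.lift ⟨edgeExponent G, edgeExponent_comm⟩) G.edgeFinset := by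
  intro e he e' he' h
  induction e using Sym2.ind with | _ a b => ?_
  induction e' using Sym2.ind with | _ c d => ?_
  have hab : G.Adj a b := by simpa using he
  have hcd : G.Adj c d := by simpa using he'
  exact (hcd.eq_of_edgeExponent_eq_single_add_single hab.ne h.symm).1.symm

theorem SimpleGraph.Adj.edgeExponent_ne_single {a b : Fin n} (hab : G.Adj a b) (k : Fin n) :
    edgeExponent G a b ≠ single k (G.maxDegree + 1) := by
  intro h
  have := nbhdPos_pos hab
  have := nbhdPos_le_maxDegree (G := G) a b
  rcases Finsupp.eq_left_or_eq_right_of_single_eq_single_add_single hab.ne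
    (Nat.succ_ne_zero _) h.symm with ⟨-, hx, -⟩ | ⟨-, hx, -⟩ <;> omega

variable (F) in
theorem cutSumPoly_eq_sum_monomial :
    cutSumPoly F G = ∑ m ∈ cutSumSupport G, monomial m 1 := by
  have hdisj : Disjoint (G.edgeFinset.image (Sym2.lift ⟨edgeExponent G, edgeExponent_comm⟩))
      (Finset.univ.image fun i => single i (G.maxDegree + 1)) := by
    simp only [Finset.disjoint_left, Finset.mem_image, Finset.mem_univ, true_and, not_exists]
    rintro - ⟨e, he, rfl⟩ k
    induction e using Sym2.ind with | _ a b => ?_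
    exact (SimpleGraph.mem_edgeFinset.1 he).edgeExponent_ne_single k ∘ Eq.symm
  rw [cutSumSupport, Finset.sum_union hdisj, Finset.sum_image injOn_lift_edgeExponent,
    Finset.sum_image fun i _ j _ h => Finsupp.single_left_injective (Nat.succ_ne_zero _) h,
    cutSumPoly]
  congr 1
  · refine Finset.sum_congr rfl fun e _ => ?_
    induction e using Sym2.ind with | _ a b => ?_
    simp [edgeExponent, X_pow_eq_monomial, monomial_mul]
  · simp [X_pow_eq_monomial]

theorem coeff_cutSumPoly (m : Fin n →₀ ℕ) :
    coeff m (cutSumPoly F G) = if m ∈ cutSumSupport G then 1 else 0 := by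
  simp [cutSumPoly_eq_sum_monomial, coeff_sum, coeff_monomial]

variable (G) in
noncomputable def cutPairs (S : Finset (Fin n)) : Finset (Fin n × Fin n) :=
  (S ×ˢ Sᶜ).filter fun p => G.Adj p.1 p.2

variable {S : Finset (Fin n)}

theorem mem_cutPairs {p : Fin n × Fin n} :
    p ∈ cutPairs G S ↔ p.1 ∈ S ∧ p.2 ∉ S ∧ G.Adj p.1 p.2 := by
  simp [cutPairs, and_assoc]

theorem card_cutFinset : (cutFinset G S).card = (cutPairs G S).card := by
  refine (Finset.card_nbij (fun p => s(p.1, p.2)) ?_ ?_ ?_).symm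
  · rintro ⟨i, j⟩ h
    obtain ⟨hi, hj, hij⟩ := mem_cutPairs.1 h
    exact Finset.mem_filter.2 ⟨by simpa using hij, i, hi, j, hj, rfl⟩
  · rintro ⟨i, j⟩ h ⟨i', j'⟩ h' he
    rcases Sym2.eq_iff.1 he with ⟨rfl, rfl⟩ | ⟨rfl, rfl⟩
    · rfl
    · exact absurd (mem_cutPairs.1 h).1 (mem_cutPairs.1 h').2.1
  · intro e he
    obtain ⟨hE, i, hi, j, hj, rfl⟩ := Finset.mem_filter.1 he
    exact ⟨(i, j), mem_cutPairs.2 ⟨hi, hj, by simpa using hE⟩, rfl⟩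

theorem filter_notMem_of_mem_cutSumSupport {m : Fin n →₀ ℕ} (hm : m ∈ cutSumSupport G)
    (hS : m.filter (· ∈ S) ≠ 0) :
    m.filter (· ∉ S) = 0 ∨
      ∃ p ∈ cutPairs G S, m.filter (· ∉ S) = single p.2 (nbhdPos G p.2 p.1) := by
  rcases mem_cutSumSupport.1 hm with ⟨a, b, hab, rfl⟩ | ⟨k, rfl⟩
  · by_cases ha : a ∈ S <;> by_cases hb : b ∈ S
    · left
      simp [edgeExponent, Finsupp.filter_add, ha, hb]
    · exact Or.inr ⟨(a, b), mem_cutPairs.2 ⟨ha, hb, hab⟩,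
        by simp [edgeExponent, Finsupp.filter_add, ha, hb]⟩
    · exact Or.inr ⟨(b, a), mem_cutPairs.2 ⟨hb, ha, hab.symm⟩,
        by simp [edgeExponent, Finsupp.filter_add, ha, hb]⟩
    · simp [edgeExponent, Finsupp.filter_add, ha, hb] at hS
  · by_cases hk : k ∈ S
    · simp [hk]
    · simp [hk] at hS

variable (F G S) in
noncomputable def cutSpanningSet : Finset ((Fin n →₀ ℕ) → F) :=
  insert (nisanMatrix (cutSumPoly F G) S 0) <| insert (Pi.single 0 1) <|
    (cutPairs G S).image fun p => Pi.single (single p.2 (nbhdPos G p.2 p.1)) 1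

theorem card_cutSpanningSet_le :
    (cutSpanningSet F G S).card ≤ (cutPairs G S).card + 2 :=
  (Finset.card_insert_le _ _).trans <| Nat.add_le_add_right
    ((Finset.card_insert_le _ _).trans (Nat.add_le_add_right Finset.card_image_le 1)) 1

theorem nisanRowSpace_cutSumPoly_le_span :
    nisanRowSpace (cutSumPoly F G) S ≤ Submodule.span F (cutSpanningSet F G S) := by
  rw [nisanRowSpace, Submodule.span_le]
  rintro - ⟨m₁, rfl⟩
  by_cases h₀ : m₁ = 0
  · subst h₀
    exact Submodule.subset_span (Finset.mem_insert_self _ _)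
  rw [nisanMatrix_eq_sum]
  refine Submodule.sum_mem _ fun m hm => ?_
  split_ifs with hS
  swap
  · exact Submodule.zero_mem _
  refine Submodule.smul_mem _ _ (Submodule.subset_span ?_)
  have hmT : m ∈ cutSumSupport G := by
    simpa [coeff_cutSumPoly] using mem_support_iff.1 hm
  rcases filter_notMem_of_mem_cutSumSupport hmT (hS ▸ h₀) with h | ⟨p, hp, h⟩ <;>
    simp [cutSpanningSet, h]
  exact Or.inr (Or.inr ⟨p.1, p.2, hp, rfl⟩)

variable (G S) in
/-- The pair `(i, e)` stands for the row of the monomial `x_i ^ e`. -/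
noncomputable def cutRowIndex (i₀ : Fin n) : cutPairs G S ⊕ Bool → Fin n × ℕ
  | .inl p => (p.1.1, nbhdPos G p.1.1 p.1.2)
  | .inr true => (i₀, G.maxDegree + 1)
  | .inr false => (i₀, 0)

variable (G S) in
/-- The pair `(j, e)` stands for the column of the monomial `x_j ^ e`. -/
noncomputable def cutColIndex (j₀ : Fin n) : cutPairs G S ⊕ Bool → Fin n × ℕ
  | .inl p => (p.1.2, nbhdPos G p.1.2 p.1.1)
  | .inr true => (j₀, 0)
  | .inr false => (j₀, G.maxDegree + 1)

theorem cutRowIndex_fst_mem {i₀ : Fin n} (hi₀ : i₀ ∈ S) (k : cutPairs G S ⊕ Bool) :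
    (cutRowIndex G S i₀ k).1 ∈ S := by
  rcases k with p | _ | _
  exacts [(mem_cutPairs.1 p.2).1, hi₀, hi₀]

theorem cutColIndex_fst_notMem {j₀ : Fin n} (hj₀ : j₀ ∉ S) (k : cutPairs G S ⊕ Bool) :
    (cutColIndex G S j₀ k).1 ∉ S := by
  rcases k with p | _ | _
  exacts [(mem_cutPairs.1 p.2).2.1, hj₀, hj₀]

theorem single_cutRowIndex_add_single_cutColIndex_mem_iff {i₀ j₀ : Fin n} (hi₀ : i₀ ∈ S)
    (hj₀ : j₀ ∉ S) (k l : cutPairs G S ⊕ Bool) :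
    single (cutRowIndex G S i₀ k).1 (cutRowIndex G S i₀ k).2 +
        single (cutColIndex G S j₀ l).1 (cutColIndex G S j₀ l).2 ∈ cutSumSupport G ↔ k = l := by
  have hne : (cutRowIndex G S i₀ k).1 ≠ (cutColIndex G S j₀ l).1 := fun h =>
    cutColIndex_fst_notMem hj₀ l (h ▸ cutRowIndex_fst_mem hi₀ k)
  rw [single_add_single_mem_cutSumSupport_iff hne]
  rcases k with ⟨⟨i, j⟩, hp⟩ | _ | _ <;> rcases l with ⟨⟨i', j'⟩, hq⟩ | _ | _
  all_goals simp [cutRowIndex, cutColIndex]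
  case inl.inl =>
    have hij : G.Adj i j := (mem_cutPairs.1 hp).2.2
    have hij' : G.Adj i' j' := (mem_cutPairs.1 hq).2.2
    have := nbhdPos_pos hij
    have := nbhdPos_le_maxDegree (G := G) i j
    constructor
    · rintro (⟨_, -⟩ | ⟨_, -⟩ | ⟨hij'', h₁, h₂⟩)
      · omega
      · omega
      obtain rfl : j = j' := nbhdPos_injOn i hij hij'' h₁
      exact ⟨(nbhdPos_injOn j hij'.symm hij.symm h₂).symm, rfl⟩
    · rintro ⟨rfl, rfl⟩
      exact Or.inr (Or.inr ⟨hij, rfl, rfl⟩)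
  all_goals grind [nbhdPos_pos, nbhdPos_le_maxDegree, mem_cutPairs, SimpleGraph.Adj.symm]

/-- The rows `x_i^{n_i(j)}` (cut pairs `(i, j)`), `x_{i₀}^{Δ+1}` and `1`, restricted to the
columns `x_j^{n_j(i)}`, `1` and `x_{j₀}^{Δ+1}`, form an identity matrix. -/
theorem linearIndependent_nisanMatrix_cutSumPoly {i₀ j₀ : Fin n} (hi₀ : i₀ ∈ S) (hj₀ : j₀ ∉ S) :
    LinearIndependent F fun k =>
      nisanMatrix (cutSumPoly F G) S (single (cutRowIndex G S i₀ k).1 (cutRowIndex G S i₀ k).2) :=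
  linearIndependent_of_apply_eq_ite
    (fun l => single (cutColIndex G S j₀ l).1 (cutColIndex G S j₀ l).2) fun k l => by
      rw [nisanMatrix_apply_of_support_subset, coeff_cutSumPoly]
      · exact if_congr (single_cutRowIndex_add_single_cutColIndex_mem_iff hi₀ hj₀ k l) rfl rfl
      · exact Finsupp.support_single_subset.trans
          (Finset.singleton_subset_iff.2 (cutRowIndex_fst_mem hi₀ k))
      · exact Finsupp.support_single_subset.trans
          (Finset.singleton_subset_iff.2 (Finset.mem_compl.2 (cutColIndex_fst_notMem hj₀ l)))

end CutSumPoly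

/-- for a simple graph `G` on `[n]` with maximum degree `Δ` and every
`S ⊆ [n]` with `1 ≤ |S| ≤ n-1`, the Nisan matrix of
`f_G = Σ_{{i,j}∈E} x_i^{n_i(j)} x_j^{n_j(i)} + Σ_i x_i^{Δ+1}` with respect to `S`
has rank `|cut(S)| + 2`. -/
theorem nisanRank_cutSumPoly
    {F : Type*} [Field F] (G : SimpleGraph (Fin n)) (S : Finset (Fin n))
    (h1 : 1 ≤ S.card) (h2 : S.card ≤ n - 1) :
    nisanRank (cutSumPoly F G) S = (cutFinset G S).card + 2 := by
  obtain ⟨i₀, hi₀⟩ := Finset.card_pos.1 h1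
  obtain ⟨j₀, -, hj₀⟩ : ∃ j ∈ Finset.univ, j ∉ S := Finset.exists_of_ssubset <|
    Finset.ssubset_univ_iff.2 fun h => by
      rw [h, Finset.card_univ, Fintype.card_fin] at h1 h2; omega
  have hle := nisanRowSpace_cutSumPoly_le_span (F := F) (G := G) (S := S)
  have := Submodule.finiteDimensional_of_le hle
  rw [nisanRank_eq_finrank, card_cutFinset]
  refine le_antisymm ((Submodule.finrank_mono hle).trans
    ((finrank_span_finset_le_card _).trans card_cutSpanningSet_le)) ?_
  have hli := linearIndependent_nisanMatrix_cutSumPoly (F := F) (G := G) hi₀ hj₀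
  calc (cutPairs G S).card + 2 = Module.finrank F (Submodule.span F (Set.range _)) := by
        rw [finrank_span_eq_card hli]; simp
    _ ≤ Module.finrank F (nisanRowSpace (cutSumPoly F G) S) :=
        Submodule.finrank_mono <| Submodule.span_le.2 <| Set.range_subset_iff.2 fun _ =>
          nisanMatrix_mem_nisanRowSpace _ _ _
end

section
/- Let f(x_1,...,x_n) be a polynomial over a field F, σ a permutation of [n], and suppose for some i the Nisan matrix M_{T_i}(f) with T_i = {σ(1),...,σ(i)} has rank r. Then every ROABP computing f in the variable order σ has at least r vertices in its i-th layer (hence width at least r). -/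
open MvPolynomial
open scoped Classical

/-- A Read-Once Oblivious Algebraic Branching Program in variable order `σ`:
a layered DAG with layers `0, …, n`, `w i` vertices in layer `i`, a single source
(layer 0) and sink (layer n), whose edges from layer `i` to layer `i+1` are recorded as
a `w i × w (i+1)` matrix of univariate polynomials, to be read in the variable
`x_{σ(i)}`. -/
structure ROABP (F : Type*) [Field F] (n : ℕ) (σ : Equiv.Perm (Fin n)) where
  w : ℕ → ℕ
  h0 : w 0 = 1
  hn : w n = 1
  mat : ∀ i : Fin n, Matrix (Fin (w i.val)) (Fin (w (i.val + 1))) (Polynomial F)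

namespace ROABP

variable {F : Type*} [Field F] {n : ℕ} {σ : Equiv.Perm (Fin n)}

/-- The product of the first `i` layer matrices, with the univariate label of layer `i`
substituted by the variable `x_{σ(i)}`. -/
noncomputable def prodUpTo (R : ROABP F n σ) :
    ∀ i : ℕ, i ≤ n → Matrix (Fin (R.w 0)) (Fin (R.w i)) (MvPolynomial (Fin n) F)
  | 0, _ => 1
  | (i + 1), h =>
      R.prodUpTo i (Nat.le_of_succ_le h) *
        ((R.mat ⟨i, h⟩).map fun p =>
          Polynomial.aeval (MvPolynomial.X (σ ⟨i, h⟩) : MvPolynomial (Fin n) F) p)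

/-- The ROABP `R` computes `f` if the source-sink entry of the full layered product
equals `f`. -/
def Computes (R : ROABP F n σ) (f : MvPolynomial (Fin n) F) : Prop :=
  R.prodUpTo n le_rfl ⟨0, by rw [R.h0]; exact Nat.one_pos⟩
    ⟨0, by rw [R.hn]; exact Nat.one_pos⟩ = f

/-- The width of an ROABP: the maximum number of vertices in any layer. -/
def width (R : ROABP F n σ) : ℕ := (Finset.range (n + 1)).sup R.w

end ROABP

/-!
Cutting the program after layer `i` writes `f = ∑_{k < w_i} A_k B_k`, where `A_k` (the paths
from the source to vertex `k`) involves only the variables of `T_i` and `B_k` (the paths from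
`k` to the sink) only the remaining ones. Comparing coefficients, this factors the Nisan matrix
`M_{T_i}(f)` through `F^{w_i}`, so its rank is at most `w_i`.
-/

namespace Finsupp

variable {ι : Type*}

theorem eq_of_add_eq_add_of_support_subset {s : Set ι} {a b c d : ι →₀ ℕ}
    (ha : ↑a.support ⊆ s) (hb : ↑b.support ⊆ sᶜ) (hc : ↑c.support ⊆ s) (hd : ↑d.support ⊆ sᶜ)
    (h : a + b = c + d) : a = c ∧ b = d := by
  have filter_eq {x y : ι →₀ ℕ} (hx : ↑x.support ⊆ s) (hy : ↑y.support ⊆ sᶜ) :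
      (x + y).filter (· ∈ s) = x := by
    rw [filter_add, (filter_eq_self_iff _ _).2 fun t ht => hx (mem_support_iff.2 ht),
      (filter_eq_zero_iff _ _).2 fun t hts => by_contra fun ht => hy (mem_support_iff.2 ht) hts,
      add_zero]
  have hac : a = c := by rw [← filter_eq ha hb, h, filter_eq hc hd]
  exact ⟨hac, add_left_cancel (hac ▸ h)⟩

end Finsupp

namespace MvPolynomial

variable {ι R : Type*} [CommSemiring R]

theorem support_subset_of_mem_supported {s : Set ι} {p : MvPolynomial ι R}
    (hp : p ∈ supported R s) {m : ι →₀ ℕ} (hm : m ∈ p.support) : ↑m.support ⊆ s :=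
  fun x hx => mem_supported.1 hp ((mem_vars_iff_mem_support x).2 ⟨m, hm, hx⟩)

theorem coeff_add_mul_of_mem_supported {s : Set ι} {p q : MvPolynomial ι R}
    (hp : p ∈ supported R s) (hq : q ∈ supported R sᶜ) {m₁ m₂ : ι →₀ ℕ}
    (h₁ : ↑m₁.support ⊆ s) (h₂ : ↑m₂.support ⊆ sᶜ) :
    coeff (m₁ + m₂) (p * q) = coeff m₁ p * coeff m₂ q := by
  rw [coeff_mul]
  refine Finset.sum_eq_single (m₁, m₂) (fun ⟨a, b⟩ hab hne => by_contra fun hne0 => hne ?_)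
    fun h => (h (by simp)).elim
  obtain ⟨ha, hb⟩ := ne_zero_and_ne_zero_of_mul hne0
  obtain ⟨rfl, rfl⟩ := Finsupp.eq_of_add_eq_add_of_support_subset
    (support_subset_of_mem_supported hp (mem_support_iff.2 ha))
    (support_subset_of_mem_supported hq (mem_support_iff.2 hb)) h₁ h₂
    (Finset.HasAntidiagonal.mem_antidiagonal.1 hab)
  rfl

theorem aeval_X_mem_supported_singleton (v : ι) (p : Polynomial R) :
    Polynomial.aeval (X v : MvPolynomial ι R) p ∈ supported R {v} := by
  rw [supported_eq_adjoin_X, Set.image_singleton, Algebra.adjoin_singleton_eq_range_aeval]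
  exact ⟨p, rfl⟩

end MvPolynomial

namespace Matrix

variable {R A l m p : Type*} [CommSemiring R] [Semiring A] [Algebra R A]

theorem one_apply_mem [DecidableEq m] (S : Subalgebra R A) (i j : m) :
    (1 : Matrix m m A) i j ∈ S := by
  rw [one_apply]
  split_ifs
  exacts [one_mem S, zero_mem S]

theorem mul_apply_mem [Fintype m] {S : Subalgebra R A} {M : Matrix l m A} {N : Matrix m p A}
    (hM : ∀ i j, M i j ∈ S) (hN : ∀ j k, N j k ∈ S) (i : l) (k : p) : (M * N) i k ∈ S :=
  Subalgebra.sum_mem S fun j _ => mul_mem (hM i j) (hN j k)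

theorem finrank_span_range_mul_le {K : Type*} [Field K] [Fintype m]
    (M : Matrix l m K) (N : Matrix m p K) :
    Module.finrank K (Submodule.span K (Set.range (M * N))) ≤ Fintype.card m := by
  have hle : Submodule.span K (Set.range (M * N)) ≤ Submodule.span K (Set.range N) := by
    refine Submodule.span_le.2 (Set.range_subset_iff.2 fun i => ?_)
    rw [show (M * N) i = ∑ j, M i j • N j from vecMul_eq_sum (M i) N]
    exact Submodule.sum_mem _ fun j _ => Submodule.smul_mem _ _ (Submodule.subset_span ⟨j, rfl⟩)
  have : FiniteDimensional K (Submodule.span K (Set.range N)) :=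
    FiniteDimensional.span_of_finite K (Set.finite_range N)
  exact (Submodule.finrank_mono hle).trans (finrank_range_le_card N)

end Matrix

section Nisan

variable {F : Type*} [Field F] {n : ℕ}

theorem nisanMatrix_eq_mul_of_eq_sum {ι : Type*} [Fintype ι] {f : MvPolynomial (Fin n) F}
    {S : Finset (Fin n)} {A B : ι → MvPolynomial (Fin n) F} (hf : f = ∑ k, A k * B k)
    (hA : ∀ k, A k ∈ supported F ↑S) (hB : ∀ k, B k ∈ supported F (↑S)ᶜ) :
    nisanMatrix f S =
      Matrix.of (fun m₁ k => if m₁.support ⊆ S then coeff m₁ (A k) else 0) *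
        Matrix.of fun k m₂ => if m₂.support ⊆ Sᶜ then coeff m₂ (B k) else 0 := by
  ext m₁ m₂
  simp only [nisanMatrix, Matrix.mul_apply, Matrix.of_apply]
  by_cases h : m₁.support ⊆ S ∧ m₂.support ⊆ Sᶜ
  · have h₁ : (↑m₁.support : Set (Fin n)) ⊆ ↑S := Finset.coe_subset.2 h.1
    have h₂ : (↑m₂.support : Set (Fin n)) ⊆ (↑S)ᶜ := by
      rw [← Finset.coe_compl]; exact Finset.coe_subset.2 h.2
    simp only [h, and_self, if_true, hf, coeff_sum,
      coeff_add_mul_of_mem_supported (hA _) (hB _) h₁ h₂]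
  · rw [if_neg h]
    refine (Finset.sum_eq_zero fun k _ => ?_).symm
    split_ifs <;> simp_all

theorem nisanRank_le_card_of_eq_sum {ι : Type*} [Fintype ι] {f : MvPolynomial (Fin n) F}
    {S : Finset (Fin n)} {A B : ι → MvPolynomial (Fin n) F} (hf : f = ∑ k, A k * B k)
    (hA : ∀ k, A k ∈ supported F ↑S) (hB : ∀ k, B k ∈ supported F (↑S)ᶜ) :
    nisanRank f S ≤ Fintype.card ι := by
  rw [nisanRank, nisanMatrix_eq_mul_of_eq_sum hf hA hB]
  exact Matrix.finrank_span_range_mul_le _ _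

end Nisan

namespace ROABP

variable {F : Type*} [Field F] {n : ℕ} {σ : Equiv.Perm (Fin n)}

/-- The set `T_i = {σ(1), …, σ(i)}`, with `Fin n` counted from `0`. -/
def prefixVars (σ : Equiv.Perm (Fin n)) (i : ℕ) : Finset (Fin n) :=
  (Finset.univ.filter fun t : Fin n => t.val < i).image σ

theorem apply_mem_prefixVars_iff {i : ℕ} {t : Fin n} : σ t ∈ prefixVars σ i ↔ t.val < i := by
  simp [prefixVars]

theorem prefixVars_mono (σ : Equiv.Perm (Fin n)) : Monotone (prefixVars σ) := fun _ _ h =>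
  Finset.image_subset_image fun t ht =>
    Finset.mem_filter.2 ⟨Finset.mem_univ t, (Finset.mem_filter.1 ht).2.trans_le h⟩

noncomputable def layerMatrix (R : ROABP F n σ) (j : Fin n) :
    Matrix (Fin (R.w j)) (Fin (R.w (j + 1))) (MvPolynomial (Fin n) F) :=
  (R.mat j).map fun p => Polynomial.aeval (X (σ j) : MvPolynomial (Fin n) F) p

theorem prodUpTo_succ (R : ROABP F n σ) (j : ℕ) (h : j + 1 ≤ n) :
    R.prodUpTo (j + 1) h = R.prodUpTo j (Nat.le_of_succ_le h) * R.layerMatrix ⟨j, h⟩ :=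
  rfl

theorem layerMatrix_mem_supported (R : ROABP F n σ) (j : Fin n) (k l) :
    R.layerMatrix j k l ∈ supported F {σ j} :=
  aeval_X_mem_supported_singleton _ _

theorem prodUpTo_mem_supported (R : ROABP F n σ) :
    ∀ (j : ℕ) (hj : j ≤ n) (k l), R.prodUpTo j hj k l ∈ supported F ↑(prefixVars σ j)
  | 0, _, k, l => Matrix.one_apply_mem _ k l
  | j + 1, hj, k, l => by
    rw [prodUpTo_succ]
    refine Matrix.mul_apply_mem (fun k m => supported_mono ?_ (R.prodUpTo_mem_supported j _ k m))
      (fun m l => supported_mono ?_ (R.layerMatrix_mem_supported ⟨j, hj⟩ m l)) k l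
    · exact Finset.coe_subset.2 (prefixVars_mono σ j.le_succ)
    · simp [apply_mem_prefixVars_iff]

theorem exists_prodUpTo_eq_mul (R : ROABP F n σ) {i j : ℕ} (hij : i ≤ j) (hj : j ≤ n) :
    ∃ B : Matrix (Fin (R.w i)) (Fin (R.w j)) (MvPolynomial (Fin n) F),
      (∀ k l, B k l ∈ supported F (↑(prefixVars σ i))ᶜ) ∧
        R.prodUpTo j hj = R.prodUpTo i (hij.trans hj) * B := by
  induction j, hij using Nat.le_induction with
  | base => exact ⟨1, Matrix.one_apply_mem _, (Matrix.mul_one _).symm⟩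
  | succ j hij ih =>
    obtain ⟨B, hB, hsplit⟩ := ih (Nat.le_of_succ_le hj)
    refine ⟨B * R.layerMatrix ⟨j, hj⟩, Matrix.mul_apply_mem hB fun m l => ?_, ?_⟩
    · refine supported_mono ?_ (R.layerMatrix_mem_supported ⟨j, hj⟩ m l)
      simp [apply_mem_prefixVars_iff, hij]
    · rw [prodUpTo_succ, hsplit, Matrix.mul_assoc]

end ROABP

/-- one direction of Nisan's characterization: if the Nisan matrix of `f`
with respect to the prefix `T_i = {σ(1), …, σ(i)}` has rank `r`, then every ROABP
computing `f` in order `σ` has at least `r` vertices in its `i`-th layer. -/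
theorem roabp_layer_lower_bound
    {F : Type*} [Field F] {n : ℕ} (f : MvPolynomial (Fin n) F)
    (σ : Equiv.Perm (Fin n)) (i : ℕ) (hi : i ≤ n) (r : ℕ)
    (hr : nisanRank f ((Finset.univ.filter fun t : Fin n => t.val < i).image σ) = r)
    (R : ROABP F n σ) (hcomp : R.Computes f) :
    r ≤ R.w i := by
  obtain ⟨B, hB, hsplit⟩ := R.exists_prodUpTo_eq_mul hi le_rfl
  have hf : f = ∑ k, R.prodUpTo i hi ⟨0, by rw [R.h0]; exact Nat.one_pos⟩ k *
      B k ⟨0, by rw [R.hn]; exact Nat.one_pos⟩ := by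
    rw [← hcomp, hsplit, Matrix.mul_apply]
  calc r = nisanRank f (ROABP.prefixVars σ i) := hr.symm
    _ ≤ Fintype.card (Fin (R.w i)) :=
      nisanRank_le_card_of_eq_sum hf (fun k => R.prodUpTo_mem_supported i hi _ k) (fun k => hB k _)
    _ = R.w i := Fintype.card_fin _
end
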